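/- (Lemma 3 of the paper) With S_{A,B} and its auxiliary arrays defined from R_{A,B}, the [r(1,j⊢):r(m,j⊣)]-banded HIS weight of R_{A,B}[f(i⊢,1):f(i⊣,n)] equals the [H⊢[j⊢]:H⊣[j⊣]]-banded LIS length of S_{A,B}[G⊢[i⊢]:G⊣[i⊣]]. -/

import Mathlib

/-- `hEnd S v` is `h⊣(v)`: the sum of the weights of the elements of the weighted
sequence `S` (value-weight pairs) whose value is at most `v`. -/
def hEnd (S : List (ℕ × ℕ)) (v : ℕ) : ℕ :=
  ((S.filter fun p => decide (p.1 ≤ v)).map Prod.snd).sum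

/-- Replace each weighted element `(v, w)` of `S` by the run of `w` consecutive
integers `h⊣(v) - w + 1, …, h⊣(v)`, in position order. -/
def blow (S : List (ℕ × ℕ)) : List ℕ :=
  S.flatMap fun p => List.range' (hEnd S p.1 - p.2 + 1) p.2


/-- The value `r(i,j) = (j-1)(2m-1) + i`. -/
def vr (m i j : ℕ) : ℕ := (j - 1) * (2 * m - 1) + i

/-- The value `r̃(i,j) = (j-1)(2m-1) - i + 2`. -/
def vrt (m i j : ℕ) : ℕ := (j - 1) * (2 * m - 1) - i + 2

/-- The weighted sequence `R_{A,B}` as a list of value-weight pairs, in position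
order: row block `i` consists of `r(i,1), …, r(i,n)` (weights `c - d(i,j)`) followed,
if `i < m`, by `r̃(i+1,n), …, r̃(i+1,2)` (weights `c`). -/
def Rw (m n c : ℕ) (d : ℕ → ℕ → ℕ) : List (ℕ × ℕ) :=
  (List.range m).flatMap fun i0 =>
    ((List.range n).map fun j0 => (vr m (i0 + 1) (j0 + 1), c - d (i0 + 1) (j0 + 1))) ++
      (if i0 + 1 < m then (List.range (n - 1)).map fun k => (vrt m (i0 + 2) (n - k), c)
       else [])

/-- The DTW distance sequence `S_{A,B}`, obtained by blowing up each element of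
`R_{A,B}` into its run of consecutive integers. -/
def Sseq (m n c : ℕ) (d : ℕ → ℕ → ℕ) : List ℕ := blow (Rw m n c d)

/-- The contiguous listSeg of `L` from (1-based) position `a` through position `b`. -/
def listSeg {α : Type*} (L : List α) (a b : ℕ) : List α := (L.drop (a - 1)).take (b + 1 - a)

/-- `G⊢[i] = g⊢(r(i,1))`: start position in `S_{A,B}` of the run of `r(i,1)`. -/
def Gl (m n c : ℕ) (d : ℕ → ℕ → ℕ) (i : ℕ) : ℕ :=
  (((Rw m n c d).take ((i - 1) * (2 * n - 1))).map Prod.snd).sum + 1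

/-- `G⊣[i] = g⊣(r(i,n))`: end position in `S_{A,B}` of the run of `r(i,n)`. -/
def Gr (m n c : ℕ) (d : ℕ → ℕ → ℕ) (i : ℕ) : ℕ :=
  (((Rw m n c d).take ((i - 1) * (2 * n - 1) + n)).map Prod.snd).sum

/-- `H⊢[j] = h⊢(r(1,j))`: first value of the run of `r(1,j)`. -/
def Hl (m n c : ℕ) (d : ℕ → ℕ → ℕ) (j : ℕ) : ℕ :=
  hEnd (Rw m n c d) (vr m 1 j) - (c - d 1 j) + 1

/-- `H⊣[j] = h⊣(r(m,j))`: last value of the run of `r(m,j)`. -/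
def Hr (m n c : ℕ) (d : ℕ → ℕ → ℕ) (j : ℕ) : ℕ :=
  hEnd (Rw m n c d) (vr m m j)

/-- The `[lo:hi]`-banded LIS length of an integer sequence. -/
noncomputable def bandLIS (lo hi : ℕ) (L : List ℕ) : ℕ :=
  sSup {x | ∃ T : List ℕ, T.Sublist L ∧ T.Chain' (· < ·) ∧
    (∀ v ∈ T, lo ≤ v ∧ v ≤ hi) ∧ x = T.length}

/-- The `[lo:hi]`-banded HIS weight of a weighted integer sequence. -/
noncomputable def bandHISw (lo hi : ℕ) (L : List (ℕ × ℕ)) : ℕ :=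
  sSup {x | ∃ T : List (ℕ × ℕ), T.Sublist L ∧ (T.map Prod.fst).Chain' (· < ·) ∧
    (∀ p ∈ T, lo ≤ p.1 ∧ p.1 ≤ hi) ∧ x = (T.map Prod.snd).sum}


/-!
Blowing each entry `(v, w)` of `R` up into the run of `w` consecutive integers ending at `h⊣(v)`
preserves the order of values: the values of `R_{A,B}` are distinct, so the run of a smaller value
consists of smaller integers. An increasing subsequence of `R` of weight `W` therefore blows up to
an increasing subsequence of `S` of length `W`; conversely, an increasing subsequence of `S` meets
the runs of an increasing subsequence of `R`, and it has at most `w` terms in the run of `(v, w)`.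
The value band `[r(1,j⊢), r(m,j⊣)]` is hit exactly by the runs inside the band
`[H⊢[j⊢], H⊣[j⊣]]`, and the segment of `R` between the row blocks `i⊢` and `i⊣` blows up to the
segment of `S` between `G⊢[i⊢]` and `G⊣[i⊣]`.
-/

open List

section Banded

variable {lo hi k : ℕ}

lemma le_bandLIS {L T : List ℕ} (hT : T.Sublist L) (hc : T.Pairwise (· < ·))
    (hb : ∀ v ∈ T, lo ≤ v ∧ v ≤ hi) : T.length ≤ bandLIS lo hi L :=
  le_csSup ⟨L.length, by rintro _ ⟨T, hT, -, -, rfl⟩; exact hT.length_le⟩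
    ⟨T, hT, isChain_iff_pairwise.2 hc, hb, rfl⟩

lemma bandLIS_le {L : List ℕ}
    (h : ∀ T : List ℕ, T.Sublist L → T.Pairwise (· < ·) → (∀ v ∈ T, lo ≤ v ∧ v ≤ hi) →
      T.length ≤ k) :
    bandLIS lo hi L ≤ k :=
  csSup_le' <| by
    rintro _ ⟨T, hT, hc, hb, rfl⟩
    exact h T hT (isChain_iff_pairwise.1 hc) hb

lemma le_bandHISw {L T : List (ℕ × ℕ)} (hT : T.Sublist L)
    (hc : (T.map Prod.fst).Pairwise (· < ·)) (hb : ∀ p ∈ T, lo ≤ p.1 ∧ p.1 ≤ hi) :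
    (T.map Prod.snd).sum ≤ bandHISw lo hi L :=
  le_csSup ⟨(L.map Prod.snd).sum, by
      rintro _ ⟨T, hT, -, -, rfl⟩; exact (hT.map _).sum_le_sum fun _ _ => Nat.zero_le _⟩
    ⟨T, hT, isChain_iff_pairwise.2 hc, hb, rfl⟩

lemma bandHISw_le {L : List (ℕ × ℕ)}
    (h : ∀ T : List (ℕ × ℕ), T.Sublist L → (T.map Prod.fst).Pairwise (· < ·) →
      (∀ p ∈ T, lo ≤ p.1 ∧ p.1 ≤ hi) → (T.map Prod.snd).sum ≤ k) :
    bandHISw lo hi L ≤ k :=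
  csSup_le' <| by
    rintro _ ⟨T, hT, hc, hb, rfl⟩
    exact h T hT (isChain_iff_pairwise.1 hc) hb

end Banded

lemma exists_sublist_of_pairwise_sublist_flatMap {α β γ : Type*} [LinearOrder β] [LinearOrder γ]
    {key : α → γ} {r : α → List β} {M : List α} (hM : (M.map key).Nodup)
    (hr : ∀ a ∈ M, ∀ b ∈ M, key a < key b → ∀ x ∈ r a, ∀ y ∈ r b, x < y)
    {U : List β} (hU : U.Sublist (M.flatMap r)) (hUp : U.Pairwise (· < ·)) :
    ∃ T : List α, T.Sublist M ∧ (T.map key).Pairwise (· < ·) ∧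
      U.length ≤ (T.map fun a => (r a).length).sum ∧ ∀ a ∈ T, ∃ u ∈ U, u ∈ r a := by
  induction M generalizing U with
  | nil => exact ⟨[], .slnil, .nil, by simp_all, by simp⟩
  | cons a M ih =>
    rw [map_cons, nodup_cons] at hM
    rw [flatMap_cons] at hU
    obtain ⟨U₁, U₂, rfl, hU₁, hU₂⟩ := sublist_append_iff.1 hU
    obtain ⟨T, hTM, hTp, hTlen, hTr⟩ := ih hM.2
      (fun a ha b hb => hr a (mem_cons_of_mem _ ha) b (mem_cons_of_mem _ hb)) hU₂
      (hUp.sublist (sublist_append_right _ _))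
    cases U₁ with
    | nil =>
      exact ⟨T, hTM.cons a, hTp, by simpa using hTlen, by simpa using hTr⟩
    | cons x U₁ =>
      -- `x` lies in the block of `a` and precedes in `U` the witnesses of the blocks of `T`.
      have ha_lt : ∀ b ∈ T, key a < key b := by
        intro b hb
        obtain ⟨u, huU, hub⟩ := hTr b hb
        have hbM := hTM.subset hb
        have hxu : x < u := (pairwise_append.1 hUp).2.2 x mem_cons_self u huU
        rcases lt_trichotomy (key a) (key b) with h | h | h
        · exact h
        · exact absurd (h ▸ mem_map_of_mem hbM) hM.1
        · exact absurd (hr b (mem_cons_of_mem _ hbM) a mem_cons_self h u hub x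
            (hU₁.subset mem_cons_self)) hxu.asymm
      refine ⟨a :: T, hTM.cons_cons a, ?_, ?_, ?_⟩
      · exact pairwise_cons.2 ⟨by simpa using ha_lt, hTp⟩
      · simp only [length_append, map_cons, sum_cons]
        have := hU₁.length_le
        omega
      · intro b hb
        rcases mem_cons.1 hb with rfl | hb
        · exact ⟨x, mem_append_left _ mem_cons_self, hU₁.subset mem_cons_self⟩
        · obtain ⟨u, hu, hub⟩ := hTr b hb
          exact ⟨u, mem_append_right _ hu, hub⟩

section Runs

variable {R : List (ℕ × ℕ)} {p q : ℕ × ℕ} {u v : ℕ}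

lemma hEnd_cons (p : ℕ × ℕ) (R : List (ℕ × ℕ)) (v : ℕ) :
    hEnd (p :: R) v = (if p.1 ≤ v then p.2 else 0) + hEnd R v := by
  by_cases h : p.1 ≤ v <;> simp [hEnd, h]

lemma hEnd_eq_add (R : List (ℕ × ℕ)) (huv : u ≤ v) :
    hEnd R v = hEnd R u + (R.map fun q => if u < q.1 ∧ q.1 ≤ v then q.2 else 0).sum := by
  induction R with
  | nil => rfl
  | cons q R ih =>
    simp only [hEnd_cons, map_cons, sum_cons, ih]
    split_ifs <;> omega

lemma hEnd_mono (R : List (ℕ × ℕ)) (huv : u ≤ v) : hEnd R u ≤ hEnd R v :=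
  (hEnd_eq_add R huv).symm ▸ Nat.le_add_right _ _

lemma hEnd_add_le (hp : p ∈ R) (hu : u < p.1) : hEnd R u + p.2 ≤ hEnd R p.1 := by
  rw [hEnd_eq_add R hu.le]
  gcongr
  exact le_sum_of_mem (mem_map.2 ⟨p, hp, by simp [hu]⟩)

lemma le_hEnd_of_mem (hp : p ∈ R) : p.2 ≤ hEnd R p.1 :=
  le_sum_of_mem (mem_map_of_mem (mem_filter.2 ⟨hp, by simp⟩))

/-- The run `h⊢(p.1), …, h⊣(p.1)` that replaces `p` in `blow R`. -/
def run (R : List (ℕ × ℕ)) (p : ℕ × ℕ) : List ℕ :=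
  List.range' (hEnd R p.1 - p.2 + 1) p.2

lemma blow_eq_flatMap_run (R : List (ℕ × ℕ)) : blow R = R.flatMap (run R) := rfl

@[simp]
lemma length_run (R : List (ℕ × ℕ)) (p : ℕ × ℕ) : (run R p).length = p.2 := length_range' ..

lemma length_flatMap_run (R L : List (ℕ × ℕ)) :
    (L.flatMap (run R)).length = (L.map Prod.snd).sum := by
  simp [length_flatMap]

lemma pairwise_run (R : List (ℕ × ℕ)) (p : ℕ × ℕ) : (run R p).Pairwise (· < ·) :=
  pairwise_lt_range' ..

lemma mem_run (hp : p ∈ R) : v ∈ run R p ↔ hEnd R p.1 - p.2 < v ∧ v ≤ hEnd R p.1 := by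
  have := le_hEnd_of_mem hp
  rw [run, mem_range'_1]
  omega

lemma lt_of_mem_run (hp : p ∈ R) (hq : q ∈ R) (hpq : p.1 < q.1)
    (hu : u ∈ run R p) (hv : v ∈ run R q) : u < v := by
  rw [mem_run hp] at hu
  rw [mem_run hq] at hv
  have := hEnd_add_le hq hpq
  omega

lemma band_iff_of_mem_run (hR : (R.map Prod.fst).Nodup) {lo hi w : ℕ} (hlo : (lo, w) ∈ R)
    (hp : p ∈ R) (hv : v ∈ run R p) :
    (lo ≤ p.1 ∧ p.1 ≤ hi) ↔ (hEnd R lo - w + 1 ≤ v ∧ v ≤ hEnd R hi) := by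
  rw [mem_run hp] at hv
  have hw := le_hEnd_of_mem hlo
  constructor
  · rintro ⟨hlop, hphi⟩
    have := hEnd_mono R hphi
    rcases hlop.lt_or_eq with h | h
    · have := hEnd_add_le hp h
      omega
    · obtain rfl : (lo, w) = p := inj_on_of_nodup_map hR hlo hp h
      dsimp only at *
      omega
  · rintro ⟨hlov, hvhi⟩
    constructor
    · by_contra! h
      have : hEnd R p.1 + w ≤ hEnd R lo := hEnd_add_le hlo h
      omega
    · by_contra! h
      have := hEnd_add_le hp h
      omega

end Runs

theorem bandHISw_eq_bandLIS_flatMap_run {R M : List (ℕ × ℕ)} (hR : (R.map Prod.fst).Nodup)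
    (hM : M.Sublist R) {lo hi w : ℕ} (hlo : (lo, w) ∈ R) :
    bandHISw lo hi M = bandLIS (hEnd R lo - w + 1) (hEnd R hi) (M.flatMap (run R)) := by
  have hMR : ∀ p ∈ M, p ∈ R := fun p hp => hM.subset hp
  apply le_antisymm
  · refine bandHISw_le fun T hTM hTp hTb => ?_
    have hTR : ∀ p ∈ T, p ∈ R := fun p hp => hMR p (hTM.subset hp)
    have hrun : (T.flatMap (run R)).Pairwise (· < ·) :=
      pairwise_flatMap.2 ⟨fun p _ => pairwise_run R p,
        (pairwise_map.1 hTp).imp_of_mem fun hp hq hpq _ hu _ hv =>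
          lt_of_mem_run (hTR _ hp) (hTR _ hq) hpq hu hv⟩
    have hband : ∀ v ∈ T.flatMap (run R), hEnd R lo - w + 1 ≤ v ∧ v ≤ hEnd R hi := by
      intro v hv
      obtain ⟨p, hp, hvp⟩ := mem_flatMap.1 hv
      exact (band_iff_of_mem_run hR hlo (hTR p hp) hvp).1 (hTb p hp)
    simpa only [length_flatMap_run] using le_bandLIS (hTM.flatMap _) hrun hband
  · refine bandLIS_le fun U hUM hUp hUb => ?_
    obtain ⟨T, hTM, hTp, hUT, hTU⟩ := exists_sublist_of_pairwise_sublist_flatMap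
      ((hM.map Prod.fst).nodup hR)
      (fun p hp q hq hpq _ hu _ hv => lt_of_mem_run (hMR p hp) (hMR q hq) hpq hu hv) hUM hUp
    have hTb : ∀ p ∈ T, lo ≤ p.1 ∧ p.1 ≤ hi := by
      intro p hp
      obtain ⟨u, hu, hup⟩ := hTU p hp
      exact (band_iff_of_mem_run hR hlo (hMR p (hTM.subset hp)) hup).2 (hUb u hu)
    simp only [length_run] at hUT
    exact hUT.trans (le_bandHISw hTM hTp hTb)

lemma listSeg_sublist {α : Type*} (L : List α) (a b : ℕ) : (listSeg L a b).Sublist L :=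
  (take_sublist _ _).trans (drop_sublist _ _)

lemma listSeg_flatMap {α β : Type*} (f : α → List β) (L : List α) (a b : ℕ) :
    listSeg (L.flatMap f) (((L.take a).flatMap f).length + 1) ((L.take b).flatMap f).length =
      (listSeg L (a + 1) b).flatMap f := by
  have hdrop : (L.flatMap f).drop ((L.take a).flatMap f).length = (L.drop a).flatMap f := by
    conv_lhs => arg 2; rw [← take_append_drop a L]
    rw [flatMap_append, drop_left]
  simp only [listSeg, Nat.add_sub_cancel, Nat.add_sub_add_right, hdrop]
  rcases le_total a b with hab | hba
  · obtain ⟨k, rfl⟩ := Nat.exists_eq_add_of_le hab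
    rw [take_add, flatMap_append, length_append, Nat.add_sub_cancel_left, Nat.add_sub_cancel_left]
    conv_lhs => arg 2; rw [← take_append_drop k (L.drop a)]
    rw [flatMap_append, take_left]
  · have : ((L.take b).flatMap f).length ≤ ((L.take a).flatMap f).length :=
      ((take_sublist_take_left hba).flatMap f).length_le
    rw [Nat.sub_eq_zero_of_le this, Nat.sub_eq_zero_of_le hba, take_zero, take_zero, flatMap_nil]

section Values

variable {m i j : ℕ}

lemma vr_sub_one_div_mod (hi : i < m) :
    (vr m (i + 1) (j + 1) - 1) / (2 * m - 1) = j ∧ (vr m (i + 1) (j + 1) - 1) % (2 * m - 1) = i :=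
  (Nat.div_mod_unique (by omega)).2 ⟨by simp only [vr]; grind, by omega⟩

lemma vrt_sub_one_div_mod (hi : i + 1 < m) (hj : 2 ≤ j) :
    (vrt m (i + 2) j - 1) / (2 * m - 1) = j - 2 ∧
      (vrt m (i + 2) j - 1) % (2 * m - 1) = 2 * m - 2 - i := by
  refine (Nat.div_mod_unique (by omega)).2 ⟨?_, by omega⟩
  have : (j - 1) * (2 * m - 1) = (2 * m - 1) * (j - 2) + (2 * m - 1) := by
    rw [show j - 1 = j - 2 + 1 by omega]; ring
  simp only [vrt, this]
  omega

end Values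

lemma map_fst_Rw (m n c : ℕ) (d : ℕ → ℕ → ℕ) :
    (Rw m n c d).map Prod.fst = (range m).flatMap fun i =>
      (range n).map (fun j => vr m (i + 1) (j + 1)) ++
        if i + 1 < m then (range (n - 1)).map (fun k => vrt m (i + 2) (n - k)) else [] := by
  simp [Rw, map_flatMap, apply_ite, Function.comp_def]

/-- The values of `R_{A,B}` are distinct: `(v - 1) % (2m - 1)` recovers the row block and the kind
of an entry, `(v - 1) / (2m - 1)` its column. -/
theorem nodup_map_fst_Rw (m n c : ℕ) (d : ℕ → ℕ → ℕ) : ((Rw m n c d).map Prod.fst).Nodup := by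
  rw [map_fst_Rw, nodup_flatMap]
  have hres : ∀ i < m, ∀ v ∈ (range n).map (fun j => vr m (i + 1) (j + 1)) ++
      (if i + 1 < m then (range (n - 1)).map (fun k => vrt m (i + 2) (n - k)) else []),
      (v - 1) % (2 * m - 1) = i ∨ (i + 1 < m ∧ (v - 1) % (2 * m - 1) = 2 * m - 2 - i) := by
    intro i hi v hv
    simp only [mem_append, mem_map, mem_range] at hv
    rcases hv with ⟨j, -, rfl⟩ | hv
    · exact .inl (vr_sub_one_div_mod hi).2
    · split_ifs at hv with him
      · obtain ⟨k, hk, rfl⟩ := mem_map.1 hv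
        exact .inr ⟨him, (vrt_sub_one_div_mod him (by rw [mem_range] at hk; omega)).2⟩
      · simp at hv
  refine ⟨fun i hi => ?_, ?_⟩
  · rw [mem_range] at hi
    refine nodup_append.2 ⟨nodup_range.map_on fun j _ j' _ h => ?_, ?_, ?_⟩
    · simpa [(vr_sub_one_div_mod hi).1] using congrArg (fun v => (v - 1) / (2 * m - 1)) h
    · split_ifs with him
      · refine nodup_range.map_on fun k hk k' hk' h => ?_
        rw [mem_range] at hk hk'
        have := congrArg (fun v => (v - 1) / (2 * m - 1)) h
        simp only [(vrt_sub_one_div_mod him (j := n - k) (by omega)).1,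
          (vrt_sub_one_div_mod him (j := n - k') (by omega)).1] at this
        omega
      · exact nodup_nil
    · intro v hv w hw hvw
      split_ifs at hw with him
      · obtain ⟨j, -, rfl⟩ := mem_map.1 hv
        obtain ⟨k, hk, rfl⟩ := mem_map.1 hw
        have h1 := (vr_sub_one_div_mod (j := j) hi).2
        have h2 := (vrt_sub_one_div_mod him (j := n - k) (by rw [mem_range] at hk; omega)).2
        rw [hvw] at h1
        omega
      · simp at hw
  · refine nodup_range.pairwise_of_forall_ne fun i hi i' hi' hii' v hv hv' => ?_
    rw [mem_range] at hi hi'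
    have := hres i hi v hv
    have := hres i' hi' v hv'
    omega

lemma mem_Rw {m n c i j : ℕ} (d : ℕ → ℕ → ℕ) (hi : 1 ≤ i) (him : i ≤ m) (hj : 1 ≤ j)
    (hjn : j ≤ n) : (vr m i j, c - d i j) ∈ Rw m n c d := by
  obtain ⟨i, rfl⟩ := Nat.exists_eq_add_of_le' hi
  obtain ⟨j, rfl⟩ := Nat.exists_eq_add_of_le' hj
  simp only [Rw, mem_flatMap, mem_range, mem_append, mem_map]
  exact ⟨i, by omega, .inl ⟨j, by omega, rfl⟩⟩

lemma listSeg_Sseq (m n c : ℕ) (d : ℕ → ℕ → ℕ) (il ir : ℕ) :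
    listSeg (Sseq m n c d) (Gl m n c d il) (Gr m n c d ir) =
      (listSeg (Rw m n c d) ((il - 1) * (2 * n - 1) + 1) ((ir - 1) * (2 * n - 1) + n)).flatMap
        (run (Rw m n c d)) := by
  rw [Sseq, blow_eq_flatMap_run, ← listSeg_flatMap, length_flatMap_run, length_flatMap_run, Gl, Gr]

theorem banded_HIS_eq_banded_LIS_general (m n c : ℕ) (d : ℕ → ℕ → ℕ)
    (il ir jl jr : ℕ)
    (hil : 1 ≤ il) (hii : il ≤ ir) (him : ir ≤ m)
    (hjl : 1 ≤ jl) (hjj : jl ≤ jr) (hjn : jr ≤ n) :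
    bandHISw (vr m 1 jl) (vr m m jr)
        (listSeg (Rw m n c d) ((il - 1) * (2 * n - 1) + 1) ((ir - 1) * (2 * n - 1) + n)) =
      bandLIS (Hl m n c d jl) (Hr m n c d jr)
        (listSeg (Sseq m n c d) (Gl m n c d il) (Gr m n c d ir)) := by
  rw [listSeg_Sseq]
  exact bandHISw_eq_bandLIS_flatMap_run (nodup_map_fst_Rw m n c d)
    (listSeg_sublist _ _ _)
    (mem_Rw d le_rfl (hil.trans (hii.trans him)) hjl (hjj.trans hjn))

theorem banded_HIS_eq_banded_LIS (m n c : ℕ) (d : ℕ → ℕ → ℕ)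
    (hd : ∀ i j, d i j ≤ c) (il ir jl jr : ℕ)
    (hil : 1 ≤ il) (hii : il ≤ ir) (him : ir ≤ m)
    (hjl : 1 ≤ jl) (hjj : jl ≤ jr) (hjn : jr ≤ n) :
    bandHISw (vr m 1 jl) (vr m m jr)
        (listSeg (Rw m n c d) ((il - 1) * (2 * n - 1) + 1) ((ir - 1) * (2 * n - 1) + n)) =
      bandLIS (Hl m n c d jl) (Hr m n c d jr)
        (listSeg (Sseq m n c d) (Gl m n c d il) (Gr m n c d ir)) :=
  banded_HIS_eq_banded_LIS_general m n c d il ir jl jr hil hii him hjl hjj hjn
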